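/- Let g : {0,1}^n → ℝ^n be monotone increasing and let u ∈ ℝ̄^n with minimal equilibrium y = E(u). For every coordinate k with y_k = 1, the shock satisfies u_k ≤ g(E(u[k:=+∞]))_k, i.e., the shock lies weakly below the threshold t_k = T_k(u). -/

import Mathlib

/-!
Put `z = E(u[k:=+∞])`. An infinite shock is never met, so `z_k = 0`. If `g(z)_k < u_k`, then
`G_u` also leaves coordinate `k` of `z` off and agrees with `G_{u[k:=+∞]}` elsewhere, so `z` is a
pre-fixed point of `G_u`; as `E(u)` lies below every pre-fixed point, `y_k ≤ z_k = 0`.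

That `E(u)` is a fixed point at all rests on a height argument: the iterates of a monotone map
from `0` increase, and until they stabilise each step turns on a new coordinate, which can happen
at most `n` times.
-/

open Function

/-- Best-response map: `G_u(y) i = 𝟙(g(y)_i ≥ u_i)`, comparisons in the extended reals. -/
noncomputable def Gmap {n : ℕ} (g : (Fin n → Bool) → Fin n → ℝ) (u : Fin n → EReal)
    (y : Fin n → Bool) : Fin n → Bool :=
  fun i => decide (u i ≤ ((g y i : ℝ) : EReal))

/-- Minimal equilibrium: `E(u) = (G_u)^[n](0)`. -/
noncomputable def Emin {n : ℕ} (g : (Fin n → Bool) → Fin n → ℝ) (u : Fin n → EReal) : Fin n → Bool :=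
  (Gmap g u)^[n] (fun _ => false)

theorem isFixedPt_iterate_bot_of_strictMono {α : Type*} [PartialOrder α] [OrderBot α]
    {f : α → α} (hf : Monotone f) {φ : α → ℕ} (hφ : StrictMono φ) {N : ℕ}
    (hN : ∀ x, φ x ≤ N) : IsFixedPt f (f^[N] ⊥) := by
  have hstep : ∀ m, IsFixedPt f (f^[m] ⊥) ∨ φ (f^[m] ⊥) < φ (f^[m + 1] ⊥) := fun m => by
    have hle : f^[m] ⊥ ≤ f^[m + 1] ⊥ := hf.monotone_iterate_of_le_map bot_le m.le_succ
    rw [iterate_succ_apply'] at hle ⊢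
    exact hle.eq_or_lt.imp Eq.symm (fun h => hφ h)
  have hfix_succ : ∀ m, IsFixedPt f (f^[m] ⊥) → IsFixedPt f (f^[m + 1] ⊥) := fun m hfix => by
    rwa [iterate_succ_apply', hfix.eq]
  have hclimb : ∀ m, IsFixedPt f (f^[m] ⊥) ∨ m ≤ φ (f^[m] ⊥) := by
    intro m
    induction m with
    | zero => exact Or.inr (Nat.zero_le _)
    | succ m ih =>
      rcases hstep m with hfix | hlt
      · exact Or.inl (hfix_succ m hfix)
      · exact ih.imp (hfix_succ m) fun hm => by omega
  rcases hclimb N with hfix | hN_le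
  · exact hfix
  · exact (hstep N).resolve_right fun hlt => (hN _).not_gt (hN_le.trans_lt hlt)

theorem strictMono_sum_toNat {ι : Type*} [Fintype ι] :
    StrictMono fun x : ι → Bool => ∑ i, (x i).toNat := by
  intro x y hxy
  obtain ⟨hle, i, hi⟩ := Pi.lt_def.mp hxy
  refine Finset.sum_lt_sum (fun j _ => Bool.toNat_le_toNat (hle j)) ⟨i, Finset.mem_univ i, ?_⟩
  revert hi
  cases x i <;> cases y i <;> decide

theorem sum_toNat_le_card {ι : Type*} [Fintype ι] (x : ι → Bool) :
    ∑ i, (x i).toNat ≤ Fintype.card ι :=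
  (Finset.sum_le_card_nsmul _ _ 1 fun i _ => Bool.toNat_le (x i)).trans_eq (by simp)

theorem isFixedPt_iterate_bot_card {ι : Type*} [Fintype ι] {f : (ι → Bool) → ι → Bool}
    (hf : Monotone f) : IsFixedPt f (f^[Fintype.card ι] ⊥) :=
  isFixedPt_iterate_bot_of_strictMono hf strictMono_sum_toNat sum_toNat_le_card

section Equilibrium

variable {n : ℕ} {g : (Fin n → Bool) → Fin n → ℝ}

theorem monotone_gmap (hg : Monotone g) (u : Fin n → EReal) : Monotone (Gmap g u) :=
  fun _ _ hxy i => by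
    simp only [Gmap, Bool.le_iff_imp, decide_eq_true_eq]
    exact fun h => h.trans (EReal.coe_le_coe_iff.mpr (hg hxy i))

theorem isFixedPt_emin (hg : Monotone g) (u : Fin n → EReal) : IsFixedPt (Gmap g u) (Emin g u) := by
  have h := isFixedPt_iterate_bot_card (monotone_gmap hg u)
  rwa [Fintype.card_fin] at h

theorem emin_le_of_gmap_le (hg : Monotone g) {u : Fin n → EReal} {z : Fin n → Bool}
    (hz : Gmap g u z ≤ z) : Emin g u ≤ z :=
  calc Emin g u ≤ (Gmap g u)^[n] z := (monotone_gmap hg u).iterate n bot_le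
    _ ≤ z := (monotone_gmap hg u).antitone_iterate_of_map_le hz (Nat.zero_le n)

theorem emin_update_top_apply_self (hg : Monotone g) (u : Fin n → EReal) (k : Fin n) :
    Emin g (update u k ⊤) k = false := by
  rw [← isFixedPt_emin hg _]
  simp [Gmap]

end Equilibrium

/-- If `y = E(u)` is the minimal equilibrium and `y_k = 1`, then the shock `u_k` lies
weakly below the threshold `t_k = g(E(u[k:=+∞]))_k`. -/
theorem shock_le_threshold_of_action {n : ℕ} (g : (Fin n → Bool) → Fin n → ℝ)
    (hg : Monotone g) (u : Fin n → EReal) (y : Fin n → Bool) (hy : Emin g u = y)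
    (k : Fin n) (hk : y k = true) :
    u k ≤ ((g (Emin g (Function.update u k ⊤)) k : ℝ) : EReal) := by
  set z := Emin g (update u k ⊤)
  have hz : IsFixedPt (Gmap g (update u k ⊤)) z := isFixedPt_emin hg _
  have hzk : z k = false := emin_update_top_apply_self hg u k
  by_contra! hlt
  have hpre : Gmap g u z ≤ z := by
    intro i
    rcases eq_or_ne i k with rfl | hik
    · simp [Gmap, hzk, hlt.not_ge]
    · rw [← congrFun hz.eq i]
      simp [Gmap, hik]
  have hyz := emin_le_of_gmap_le hg hpre k
  rw [hy, hk, hzk] at hyz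
  exact absurd hyz (by simp)
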